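/- Let γ ∈ (0,2), Q = γ/2 + 2/γ, and let α₁, α₂, α₃ be real numbers with ᾱ = α₁ + α₂ + α₃. Set (corresponding to the degenerate weight α₀ = −2/γ): a = (−1/γ)(Q + 4/γ − ᾱ) − 1/2, b = (−1/γ)(Q − α₁ − α₂ + α₃) + 1/2, c = 1 − (2/γ)(Q − α₁), and A = − Γ(c)² Γ(1−a) Γ(1−b) Γ(a−c+1) Γ(b−c+1) / ( Γ(2−c)² Γ(c−a) Γ(c−b) Γ(a) Γ(b) ). Assume none of the Gamma functions appearing on either side below is evaluated at a nonpositive integer. Then A = l(2α₁/γ − 4/γ²) · l((1/γ)(ᾱ − 2α₁ − 2/γ)) / ( l(2 + 4/γ² − 2α₁/γ) · l((1/γ)(ᾱ − 2/γ − 2Q)) · l((1/γ)(ᾱ − 2α₂ − 2/γ)) · l((1/γ)(ᾱ − 2α₃ − 2/γ)) ). -/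

import Mathlib

/-!
With `c = 2α₁/γ - 4/γ²`, the six arguments of `l` on the right are
`c, a - c + 1, 2 - c, a, c - b, b`. Since `l(1 - x) = l(x)⁻¹`, the factors at `a - c + 1, a, c - b, b`
reproduce the Gamma ratios of `A` verbatim. The only genuine identity is
`l(c) / l(2 - c) = -Γ(c)² / Γ(2 - c)²`: the recurrences `Γ(c) = (c - 1) Γ(c - 1)` and
`Γ(2 - c) = (1 - c) Γ(1 - c)` cancel up to the sign, which is the sign of `A`.
-/

/-- The special function `l(x) = Γ(x)/Γ(1-x)`. -/
noncomputable def lr (x : ℝ) : ℝ := Real.Gamma x / Real.Gamma (1 - x)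

open Real

theorem lr_one_sub (x : ℝ) : lr (1 - x) = (lr x)⁻¹ := by
  rw [lr, lr, sub_sub_cancel, inv_div]

theorem lr_div_lr_two_sub {x : ℝ} (hx : x ≠ 1) :
    lr x / lr (2 - x) = -(Gamma x ^ 2 / Gamma (2 - x) ^ 2) := by
  have hx₁ : x - 1 ≠ 0 := sub_ne_zero.2 hx
  have hx₂ : 1 - x ≠ 0 := sub_ne_zero.2 hx.symm
  have h₁ : Gamma (x - 1) = Gamma x / (x - 1) := by
    rw [eq_div_iff hx₁, mul_comm, ← Gamma_add_one hx₁, sub_add_cancel]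
  have h₂ : Gamma (1 - x) = Gamma (2 - x) / (1 - x) := by
    rw [eq_div_iff hx₂, mul_comm, ← Gamma_add_one hx₂]
    ring_nf
  rw [lr, lr, show 1 - (2 - x) = x - 1 by ring, h₁, h₂]
  field_simp
  ring

theorem neg_gamma_ratio_eq_lr {a b c : ℝ} (hc : c ≠ 1) :
    -(Gamma c ^ 2 * Gamma (1 - a) * Gamma (1 - b) * Gamma (a - c + 1) * Gamma (b - c + 1))
        / (Gamma (2 - c) ^ 2 * Gamma (c - a) * Gamma (c - b) * Gamma a * Gamma b)
      = lr c * lr (a - c + 1) / (lr (2 - c) * lr a * lr (c - b) * lr b) := by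
  rw [show c - b = 1 - (b - c + 1) by ring, lr_one_sub]
  calc _ = -(Gamma c ^ 2 / Gamma (2 - c) ^ 2)
          * (lr (a - c + 1) * lr (b - c + 1) / (lr a * lr b)) := by
        simp only [lr, show 1 - (a - c + 1) = c - a by ring, show 1 - (b - c + 1) = c - b by ring,
          div_eq_mul_inv, mul_inv, inv_inv]
        ring
    _ = _ := by
        rw [← lr_div_lr_two_sub hc]
        simp only [div_eq_mul_inv, mul_inv, inv_inv]
        ring

/-- The hypergeometric connection coefficient `A_γ(-2/γ, α₁, α₂, α₃)`
equals the product of `l`-factors appearing in the dual DOZZ shift equation. -/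
theorem connection_coefficient_dual (γ α₁ α₂ α₃ : ℝ) (hγ : γ ∈ Set.Ioo (0:ℝ) 2)
    (a b c A : ℝ)
    (ha : a = (-1/γ) * ((γ/2 + 2/γ) + 4/γ - (α₁ + α₂ + α₃)) - 1/2)
    (hb : b = (-1/γ) * ((γ/2 + 2/γ) - α₁ - α₂ + α₃) + 1/2)
    (hc : c = 1 - (2/γ) * ((γ/2 + 2/γ) - α₁))
    (hA : A = -(Real.Gamma c ^ 2 * Real.Gamma (1 - a) * Real.Gamma (1 - b)
          * Real.Gamma (a - c + 1) * Real.Gamma (b - c + 1))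
        / (Real.Gamma (2 - c) ^ 2 * Real.Gamma (c - a) * Real.Gamma (c - b)
          * Real.Gamma a * Real.Gamma b))
    (hΓ : ∀ x ∈ ([c, 1 - a, 1 - b, a - c + 1, b - c + 1, 2 - c, c - a, c - b, a, b,
        2*α₁/γ - 4/γ^2, 1 - (2*α₁/γ - 4/γ^2),
        (1/γ)*((α₁+α₂+α₃) - 2*α₁ - 2/γ), 1 - (1/γ)*((α₁+α₂+α₃) - 2*α₁ - 2/γ),
        2 + 4/γ^2 - 2*α₁/γ, 1 - (2 + 4/γ^2 - 2*α₁/γ),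
        (1/γ)*((α₁+α₂+α₃) - 2/γ - 2*(γ/2 + 2/γ)),
        1 - (1/γ)*((α₁+α₂+α₃) - 2/γ - 2*(γ/2 + 2/γ)),
        (1/γ)*((α₁+α₂+α₃) - 2*α₂ - 2/γ), 1 - (1/γ)*((α₁+α₂+α₃) - 2*α₂ - 2/γ),
        (1/γ)*((α₁+α₂+α₃) - 2*α₃ - 2/γ), 1 - (1/γ)*((α₁+α₂+α₃) - 2*α₃ - 2/γ)] : List ℝ),
      ∀ m : ℕ, x ≠ -(m:ℝ)) :
    A = lr (2*α₁/γ - 4/γ^2) * lr ((1/γ)*((α₁+α₂+α₃) - 2*α₁ - 2/γ))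
        / (lr (2 + 4/γ^2 - 2*α₁/γ) * lr ((1/γ)*((α₁+α₂+α₃) - 2/γ - 2*(γ/2 + 2/γ)))
          * lr ((1/γ)*((α₁+α₂+α₃) - 2*α₂ - 2/γ))
          * lr ((1/γ)*((α₁+α₂+α₃) - 2*α₃ - 2/γ))) := by
  have hγ0 : γ ≠ 0 := hγ.1.ne'
  have h₁ : 2*α₁/γ - 4/γ^2 = c := by subst hc; field_simp; ring
  have h₂ : (1/γ)*((α₁+α₂+α₃) - 2*α₁ - 2/γ) = a - c + 1 := by subst ha hc; field_simp; ring
  have h₃ : 2 + 4/γ^2 - 2*α₁/γ = 2 - c := by subst hc; field_simp; ring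
  have h₄ : (1/γ)*((α₁+α₂+α₃) - 2/γ - 2*(γ/2 + 2/γ)) = a := by subst ha; field_simp; ring
  have h₅ : (1/γ)*((α₁+α₂+α₃) - 2*α₂ - 2/γ) = c - b := by subst hb hc; field_simp; ring
  have h₆ : (1/γ)*((α₁+α₂+α₃) - 2*α₃ - 2/γ) = b := by subst hb; field_simp; ring
  have hc_ne_one : c ≠ 1 := by
    have := hΓ (1 - (2*α₁/γ - 4/γ^2)) (by simp) 0
    rw [h₁, Nat.cast_zero, neg_zero, sub_ne_zero] at this
    exact this.symm
  rw [h₁, h₂, h₃, h₄, h₅, h₆, hA]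
  exact neg_gamma_ratio_eq_lr hc_ne_one
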